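/- (Sufficiency of the instantaneous observation in the last round.) Consider an n-round dynamic inference model with a strategy whose first n−1 estimators ψ₁,…,ψ_{n−1} are arbitrary history-dependent maps. For any history-dependent last-round estimator ψₙ : 𝒳ⁿ × 𝒴^{n−1} → 𝒴̂ there exists a Markov estimator ψ̄ₙ : 𝒳 → 𝒴̂ such that E[ℓ̄ₙ(Xₙ, ψ̄ₙ(Xₙ))] ≤ E[ℓ̄ₙ(Xₙ, ψₙ(Xⁿ, Y^{n−1}))], where the expectations are over the joint distribution of (Xⁿ, Y^{n−1}) induced by the model and the first n−1 estimators (which is unaffected by the choice of the last-round estimator). -/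
import Mathlib


noncomputable section

/-- Expectation of a real-valued function under a probability mass function on a finite type. -/
def pexp {α : Type*} [Fintype α] (p : PMF α) (f : α → ℝ) : ℝ :=
  ∑ a, (p a).toReal * f a

/-- A (history-dependent) estimation strategy: the round-`i` estimator maps the current
observation `Xᵢ`, the past observations `X^{i-1}` and the past revealed quantities `Y^{i-1}`
(together forming `(X^i, Y^{i-1})`) to an estimate `Ŷᵢ`. -/
abbrev Strategy (𝓧 𝓨 𝓨h : Type*) : Type _ := ℕ → 𝓧 → List 𝓧 → List 𝓨 → 𝓨h

/-- The strategy induced by a sequence of Markov estimators `ψᵢ : 𝓧 → 𝓨h`. -/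
def markovStrategy {𝓧 𝓨 𝓨h : Type*} (ψ : ℕ → 𝓧 → 𝓨h) : Strategy 𝓧 𝓨 𝓨h :=
  fun i x _ _ => ψ i x

/-- Replace the round-`n` estimator of a strategy by another one. -/
def replaceRound {𝓧 𝓨 𝓨h : Type*} (ψ : Strategy 𝓧 𝓨 𝓨h) (n : ℕ)
    (ψn : Strategy 𝓧 𝓨 𝓨h) : Strategy 𝓧 𝓨 𝓨h :=
  fun i x hx hy => if i = n then ψn i x hx hy else ψ i x hx hy

/-- The observation-estimate loss `ℓ̄ᵢ(x, yh) = E_{Y ∼ νᵢ(x)}[ℓ(x, Y, yh)]`. -/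
def lbar {𝓧 𝓨 𝓨h : Type*} [Fintype 𝓨] (ν : ℕ → 𝓧 → PMF 𝓨)
    (ℓ : 𝓧 → 𝓨 → 𝓨h → ℝ) (i : ℕ) (x : 𝓧) (yh : 𝓨h) : ℝ :=
  pexp (ν i x) fun y => ℓ x y yh

/-- `lossFrom κ ν L ψ i m x hx hy` : expected accumulated loss over `m` rounds (rounds
`i, i+1, …, i+m-1`), starting at round `i` with current observation `x`, past observation
history `hx` and past quantity history `hy`, under the (possibly round-dependent) contextual
loss `L` and the strategy `ψ`.  The process evolves as `Yᵢ ∼ νᵢ(Xᵢ)` (conditionally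
independent of everything else given `Xᵢ`), `Ŷᵢ = ψᵢ(X^i, Y^{i-1})`,
`X_{i+1} ∼ κ_{i+1}(Xᵢ, Ŷᵢ)`. -/
def lossFrom {𝓧 𝓨 𝓨h : Type*} [Fintype 𝓧] [Fintype 𝓨]
    (κ : ℕ → 𝓧 → 𝓨h → PMF 𝓧) (ν : ℕ → 𝓧 → PMF 𝓨)
    (L : ℕ → 𝓧 → 𝓨 → 𝓨h → ℝ) (ψ : Strategy 𝓧 𝓨 𝓨h) :
    ℕ → ℕ → 𝓧 → List 𝓧 → List 𝓨 → ℝ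
  | _, 0, _, _, _ => 0
  | i, m + 1, x, hx, hy =>
      pexp (ν i x) fun y =>
        L i x y (ψ i x hx hy) +
          pexp (κ (i + 1) x (ψ i x hx hy)) fun x' =>
            lossFrom κ ν L ψ (i + 1) m x' (hx ++ [x]) (hy ++ [y])

/-- The inference loss `J(ψ) = E[∑_{i=1}^n ℓ(Xᵢ, Yᵢ, Ŷᵢ)]` of strategy `ψ` for the
`n`-round dynamic inference problem with initial distribution `P₁`. -/
def J {𝓧 𝓨 𝓨h : Type*} [Fintype 𝓧] [Fintype 𝓨] (P₁ : PMF 𝓧)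
    (κ : ℕ → 𝓧 → 𝓨h → PMF 𝓧) (ν : ℕ → 𝓧 → PMF 𝓨)
    (ℓ : 𝓧 → 𝓨 → 𝓨h → ℝ) (n : ℕ) (ψ : Strategy 𝓧 𝓨 𝓨h) : ℝ :=
  pexp P₁ fun x => lossFrom κ ν (fun _ => ℓ) ψ 1 n x [] []

/-- `Eat κ ν g ψ i s x hx hy` : the expectation `E[g(X_{i+s}, Y_{i+s}, Ŷ_{i+s})]` of a
single-round quantity at round `i + s`, for the process started at round `i` with current
observation `x` and histories `hx`, `hy`, run under the strategy `ψ`. -/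
def Eat {𝓧 𝓨 𝓨h : Type*} [Fintype 𝓧] [Fintype 𝓨]
    (κ : ℕ → 𝓧 → 𝓨h → PMF 𝓧) (ν : ℕ → 𝓧 → PMF 𝓨)
    (g : 𝓧 → 𝓨 → 𝓨h → ℝ) (ψ : Strategy 𝓧 𝓨 𝓨h) :
    ℕ → ℕ → 𝓧 → List 𝓧 → List 𝓨 → ℝ
  | i, 0, x, hx, hy => pexp (ν i x) fun y => g x y (ψ i x hx hy)
  | i, s + 1, x, hx, hy =>
      pexp (ν i x) fun y =>
        pexp (κ (i + 1) x (ψ i x hx hy)) fun x' =>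
          Eat κ ν g ψ (i + 1) s x' (hx ++ [x]) (hy ++ [y])

/-- The dynamic-programming value function: `Vstar κ ν ℓ i m x` is `V*ᵢ(x)` when exactly `m`
rounds follow round `i` (so round `i` is the last round iff `m = 0`):
`V*ᵢ(x) = min_{yh} Q*ᵢ(x, yh)`, with `Q*` as in `Qstar`. -/
def Vstar {𝓧 𝓨 𝓨h : Type*} [Fintype 𝓧] [Fintype 𝓨]
    (κ : ℕ → 𝓧 → 𝓨h → PMF 𝓧) (ν : ℕ → 𝓧 → PMF 𝓨)
    (ℓ : 𝓧 → 𝓨 → 𝓨h → ℝ) : ℕ → ℕ → 𝓧 → ℝ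
  | i, 0, x => ⨅ yh, lbar ν ℓ i x yh
  | i, m + 1, x =>
      ⨅ yh, (lbar ν ℓ i x yh + pexp (κ (i + 1) x yh) fun x' => Vstar κ ν ℓ (i + 1) m x')

/-- The dynamic-programming Q-function: `Qstar κ ν ℓ i m x yh` is `Q*ᵢ(x, yh)` when exactly `m`
rounds follow round `i`: `Q*ₙ(x,yh) = ℓ̄ₙ(x,yh)` in the last round, and otherwise
`Q*ᵢ(x,yh) = ℓ̄ᵢ(x,yh) + E_{x' ∼ κ_{i+1}(x,yh)}[V*_{i+1}(x')]`. -/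
def Qstar {𝓧 𝓨 𝓨h : Type*} [Fintype 𝓧] [Fintype 𝓨]
    (κ : ℕ → 𝓧 → 𝓨h → PMF 𝓧) (ν : ℕ → 𝓧 → PMF 𝓨)
    (ℓ : 𝓧 → 𝓨 → 𝓨h → ℝ) : ℕ → ℕ → 𝓧 → 𝓨h → ℝ
  | i, 0, x, yh => lbar ν ℓ i x yh
  | i, m + 1, x, yh =>
      lbar ν ℓ i x yh + pexp (κ (i + 1) x yh) fun x' => Vstar κ ν ℓ (i + 1) m x'

theorem pexp_mono {α : Type*} [Fintype α] (p : PMF α) {f g : α → ℝ}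
    (h : ∀ a, f a ≤ g a) : pexp p f ≤ pexp p g := by
  unfold pexp
  exact Finset.sum_le_sum fun a _ =>
    mul_le_mul_of_nonneg_left (h a) ENNReal.toReal_nonneg

/-- **sufficiency of the instantaneous observation in the last round.**
Consider an `n`-round dynamic inference model and a strategy `ψ` whose round-`n` entry is an
arbitrary history-dependent last-round estimator `ψₙ : 𝓧ⁿ × 𝓨^{n−1} → 𝓨h` (and whose first
`n−1` estimators are arbitrary history-dependent maps). There exists a Markov estimator
`ψ̄ₙ : 𝓧 → 𝓨h` with `E[ℓ̄ₙ(Xₙ, ψ̄ₙ(Xₙ))] ≤ E[ℓ̄ₙ(Xₙ, ψₙ(Xⁿ, Y^{n−1}))]`, the expectations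
being over the joint distribution of `(Xⁿ, Y^{n−1})` induced by the model and the first
`n−1` estimators (which is unaffected by the round-`n` estimator). -/
theorem last_round_markov_sufficient {𝓧 𝓨 𝓨h : Type*} [Fintype 𝓧] [Nonempty 𝓧] [Fintype 𝓨] [Nonempty 𝓨]
    [Fintype 𝓨h] [Nonempty 𝓨h]
    (P₁ : PMF 𝓧) (κ : ℕ → 𝓧 → 𝓨h → PMF 𝓧) (ν : ℕ → 𝓧 → PMF 𝓨)
    (ℓ : 𝓧 → 𝓨 → 𝓨h → ℝ) (n : ℕ) (hn : 1 ≤ n) (ψ : Strategy 𝓧 𝓨 𝓨h) :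
    ∃ ψbar : 𝓧 → 𝓨h,
      pexp P₁ (fun x =>
          Eat κ ν (fun x _ yh => lbar ν ℓ n x yh)
            (replaceRound ψ n (fun _ x _ _ => ψbar x)) 1 (n - 1) x [] []) ≤
        pexp P₁ (fun x =>
          Eat κ ν (fun x _ yh => lbar ν ℓ n x yh) ψ 1 (n - 1) x [] []) := by
  have hmin : ∀ x, ∃ yh, ∀ yh', lbar ν ℓ n x yh ≤ lbar ν ℓ n x yh' := by
    intro x
    obtain ⟨yh, -, hyh⟩ := Finset.exists_min_image Finset.univ
      (fun yh => lbar ν ℓ n x yh) ⟨Classical.arbitrary _, Finset.mem_univ _⟩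
    exact ⟨yh, fun yh' => hyh yh' (Finset.mem_univ _)⟩
  choose ψbar hψbar using hmin
  refine ⟨ψbar, ?_⟩
  set ψ' := replaceRound ψ n (fun _ x _ _ => ψbar x) with hψ'
  have key : ∀ s i, i + s = n → ∀ x hx hy,
      Eat κ ν (fun x _ yh => lbar ν ℓ n x yh) ψ' i s x hx hy ≤
      Eat κ ν (fun x _ yh => lbar ν ℓ n x yh) ψ i s x hx hy := by
    intro s
    induction s with
    | zero =>
      intro i hi x hx hy
      subst hi
      simp only [Eat]
      apply pexp_mono
      intro y
      have h1 : ψ' i x hx hy = ψbar x := by simp [hψ', replaceRound]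
      rw [h1]
      exact hψbar x _
    | succ s ih =>
      intro i hi x hx hy
      have hin : i ≠ n := by omega
      simp only [Eat]
      have h1 : ψ' i x hx hy = ψ i x hx hy := by simp [hψ', replaceRound, hin]
      rw [h1]
      apply pexp_mono; intro y
      apply pexp_mono; intro x'
      exact ih (i + 1) (by omega) x' (hx ++ [x]) (hy ++ [y])
  exact pexp_mono P₁ fun x => key (n - 1) 1 (by omega) x [] []

end
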